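/- arXiv:0911.4851 — 3 statements merged into one kernel-verified Lean document; each statement's English description precedes it below -/
import Mathlib

section
/- Let G be a connected finite graph with a real structure. Then s(G) ≡ g(G) + 1 (mod 2), 0 ≤ s(G) ≤ g(G) + 1, s(G) ≠ g(G) + 1 in case a(G) = 1, and s(G) ≠ 0 in case a(G) = 0. -/
/-- A finite graph: finite sets of vertices and edges, and an incidence map
assigning to each edge the (unordered) pair of its ends (loops and multiple
edges are allowed). -/
structure FinGraph where
  V : Type
  E : Type
  [decV : DecidableEq V]
  [fintV : Fintype V]
  [fintE : Fintype E]
  ψ : E → Sym2 V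

attribute [instance] FinGraph.decV FinGraph.fintV FinGraph.fintE

namespace FinGraph

variable (G : FinGraph)

/-- Two vertices are adjacent if some edge has exactly them as its ends. -/
def Adj (v w : G.V) : Prop := ∃ e : G.E, G.ψ e = s(v, w)

/-- A graph is connected if it is nonempty and any two vertices are joined by a
walk (equivalently, related by the reflexive-transitive closure of adjacency). -/
def Connected : Prop := Nonempty G.V ∧ ∀ v w : G.V, Relation.ReflTransGen G.Adj v w

/-- The number of connected components. -/
noncomputable def numComponents : ℕ :=
  Nat.card (Quotient (Relation.EqvGen.setoid G.Adj))

/-- The genus `g(G) = c(G) + e(G) - v(G)`. -/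
noncomputable def genus : ℤ :=
  (numComponents G : ℤ) + (Fintype.card G.E : ℤ) - (Fintype.card G.V : ℤ)

/-- A real structure on a finite graph: involutions on vertices and edges
compatible with the incidence map. -/
structure RealStructure (G : FinGraph) where
  ιV : G.V → G.V
  ιE : G.E → G.E
  ιV_invol : ∀ v, ιV (ιV v) = v
  ιE_invol : ∀ e, ιE (ιE e) = e
  compat : ∀ e, G.ψ (ιE e) = (G.ψ e).map ιV

variable {G} (σ : RealStructure G)

/-- A vertex is real if it is fixed by the involution. -/
def RealV (v : G.V) : Prop := σ.ιV v = v

/-- An edge is real if it is fixed by the involution. -/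
def RealE (e : G.E) : Prop := σ.ιE e = e

/-- A real edge is isolated if some end of it is not a real vertex. -/
def IsolatedRealE (e : G.E) : Prop := RealE σ e ∧ ∃ v ∈ G.ψ e, ¬ RealV σ v

/-- A non-isolated real edge: a real edge all of whose ends are real vertices. -/
def NonIsolatedRealE (e : G.E) : Prop := RealE σ e ∧ ∀ v ∈ G.ψ e, RealV σ v

/-- The vertex set of the real locus graph `G(ℝ)`: the real vertices. -/
def RV := {v : G.V // RealV σ v}

/-- Adjacency in the real locus graph `G(ℝ)`: via non-isolated real edges. -/
def adjR (v w : RV σ) : Prop :=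
  ∃ e : G.E, NonIsolatedRealE σ e ∧ G.ψ e = s(v.1, w.1)

/-- The connected components of the real locus graph `G(ℝ)`. -/
def CompR := Quotient (Relation.EqvGen.setoid (adjR σ))

/-- The genus of a connected component of `G(ℝ)`:
`1 + (number of its edges) - (number of its vertices)`. -/
noncomputable def compGenus (c : CompR σ) : ℤ :=
  1 + (Nat.card {e : G.E // NonIsolatedRealE σ e ∧
        ∃ v : RV σ, v.1 ∈ G.ψ e ∧ Quotient.mk (Relation.EqvGen.setoid (adjR σ)) v = c} : ℤ)
    - (Nat.card {v : RV σ // Quotient.mk (Relation.EqvGen.setoid (adjR σ)) v = c} : ℤ)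

/-- The number `s(G) = e^i(G) + Σ_i (g(G(ℝ)_i) + 1)`. -/
noncomputable def sNum : ℤ :=
  (Nat.card {e : G.E // IsolatedRealE σ e} : ℤ) + ∑ᶠ c : CompR σ, (compGenus σ c + 1)

/-- One step of a walk containing no real vertex and no real edge. -/
def nonRealAdj (v w : G.V) : Prop :=
  ¬ RealV σ v ∧ ¬ RealV σ w ∧ ∃ e : G.E, ¬ RealE σ e ∧ G.ψ e = s(v, w)

/-- `a(G) = 1` iff there is a non-real vertex `v` and a walk from `v` to `v̄`
containing no real vertex and no real edge. -/
def aProp : Prop :=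
  ∃ v : G.V, ¬ RealV σ v ∧ Relation.ReflTransGen (nonRealAdj σ) v (σ.ιV v)

/-- `a(G)` as a number. -/
noncomputable def aNum : ℕ := @ite _ (aProp σ) (Classical.dec _) 1 0

/-- The degree of a divisor (a divisor on `G` is a function `G.V → ℤ`). -/
def deg (D : G.V → ℤ) : ℤ := ∑ v, D v

/-- A divisor is effective if all its coefficients are nonnegative. -/
def Eff (D : G.V → ℤ) : Prop := ∀ v, 0 ≤ D v

variable (G)

/-- The contribution of the edge `e` to the principal divisor `Δ(f)`. -/
def edgeLap (f : G.V → ℤ) (e : G.E) : G.V → ℤ :=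
  Sym2.lift ⟨fun a b v => (if v = a then f b - f a else 0) + (if v = b then f a - f b else 0),
    fun a b => funext fun v => add_comm _ _⟩ (G.ψ e)

/-- The principal divisor `Δ(f)(v) = Σ_{e, ψ(e) = {v,w}} (f(w) - f(v))`. -/
def Lap (f : G.V → ℤ) : G.V → ℤ := fun v => ∑ e, edgeLap G f e v

/-- Two divisors are linearly equivalent if their difference is principal. -/
def LinEquiv (D₁ D₂ : G.V → ℤ) : Prop := ∃ f : G.V → ℤ, D₂ = D₁ + Lap G f

variable {G}

/-- The conjugate divisor `D̄(v) = D(v̄)`. -/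
def conjDiv (D : G.V → ℤ) : G.V → ℤ := fun v => D (σ.ιV v)

/-- A divisor is real if it equals its conjugate. -/
def IsRealDiv (D : G.V → ℤ) : Prop := conjDiv σ D = D

variable (G)

/-- The divisor consisting of the single vertex `v`. -/
def unitDiv (v : G.V) : G.V → ℤ := fun w => if w = v then 1 else 0

/-- `RankGE G D r` : every effective divisor `E` of degree `r` is dominated by
some effective divisor `D'` linearly equivalent to `D`.  The rank `rk(D)` is
the greatest `r` with this property (note it holds vacuously for `r < 0`, so
the greatest such `r` is `-1` exactly when `|D| = ∅`). -/
def RankGE (D : G.V → ℤ) (r : ℤ) : Prop :=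
  ∀ E : G.V → ℤ, Eff E → deg E = r →
    ∃ D' : G.V → ℤ, LinEquiv G D D' ∧ Eff D' ∧ Eff (D' - E)

/-- `r` is the rank of `D`: it is the greatest element of `{r | RankGE G D r}`. -/
def HasRank (D : G.V → ℤ) (r : ℤ) : Prop := IsGreatest {r' : ℤ | RankGE G D r'} r

variable {G}

/-- The real analogue of `RankGE`, using real effective divisors only. -/
def RealRankGE (D : G.V → ℤ) (r : ℤ) : Prop :=
  ∀ E : G.V → ℤ, Eff E → IsRealDiv σ E → deg E = r →
    ∃ D' : G.V → ℤ, LinEquiv G D D' ∧ Eff D' ∧ IsRealDiv σ D' ∧ Eff (D' - E)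

/-- `r` is the real rank of `D`. -/
def HasRealRank (D : G.V → ℤ) (r : ℤ) : Prop :=
  IsGreatest {r' : ℤ | RealRankGE σ D r'} r

/-- An M-graph: a connected graph with a real structure, no isolated real
edges, and `s(G) = g(G) + 1`. -/
def IsMGraph : Prop :=
  G.Connected ∧ (∀ e : G.E, ¬ IsolatedRealE σ e) ∧ sNum σ = G.genus + 1

/-- A strong M-graph: an M-graph such that `G(ℝ)` has `g(G) + 1` connected
components. -/
def IsStrongMGraph : Prop :=
  IsMGraph σ ∧ (Nat.card (CompR σ) : ℤ) = G.genus + 1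

/-- The degree of the restriction of a divisor to the connected component `c`
of the real locus graph `G(ℝ)`. -/
noncomputable def degOn (c : CompR σ) (D : G.V → ℤ) : ℤ :=
  ∑ᶠ (v : {v : RV σ // Quotient.mk (Relation.EqvGen.setoid (adjR σ)) v = c}), D v.1.1

/-- The valence of a vertex: the number of edges incident to it. -/
noncomputable def valence (v : G.V) : ℤ := (Nat.card {e : G.E // v ∈ G.ψ e} : ℤ)

/-- The canonical divisor `K_G = Σ_v (val(v) - 2) v`. -/
noncomputable def canonicalDiv : G.V → ℤ := fun v => valence v - 2

end FinGraph

/-!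
Write `R`, `C` for the numbers of vertices and components of `G(ℝ)`, `N`, `I` for the numbers of
non-isolated and isolated real edges, and `P`, `Q` for the numbers of conjugate pairs of non-real
vertices and edges. Then `s = I + 2C + N - R` and `g + 1 = 2 + I + N + 2Q - R - 2P`, so
`g + 1 - s = 2 (Q + 1 - C - P)` is even, and the inequalities amount to `R ≤ N + C` and
`C + P ≤ Q + 1`, with `C + P ≤ Q` when `a(G) = 1`.

These are rank bounds over `𝔽₂`. The first says that the edges of `G(ℝ)` together with one vertex
per component span the free vector space on its vertices. For the second, contract every component
of `G(ℝ)` and every conjugate pair of vertices to a point: this gives a connected graph `H` with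
`C + P` vertices and `Q` edges. Choosing one vertex of each pair turns `H` into a graph with
`𝔽₂`-voltages, recorded by an extra basis vector `ε`; its twisted edge vectors, `ε` and one vertex
span everything, so `C + P + 1 ≤ Q + 2`. A walk from `v` to `v̄` avoiding real vertices and real
edges maps to a closed walk of voltage `1` in `H`, which puts `ε` into the span of the edges. Finally, if `s = 0` then
`C = I = 0`, so `G` has no real vertices or edges and any walk from `v` to `v̄` shows `a(G) = 1`.
-/

open Relation Submodule

section General

variable {α : Type*}

theorem sub_eq_add_of_zmod_two {M : Type*} [AddCommGroup M] [Module (ZMod 2) M] (x y : M) :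
    x - y = x + y := by
  rw [sub_eq_add_neg, ← neg_one_smul (ZMod 2) y, show (-1 : ZMod 2) = 1 from rfl, one_smul]

theorem add_self_eq_zero_of_zmod_two {M : Type*} [AddCommGroup M] [Module (ZMod 2) M] (x : M) :
    x + x = 0 := by
  rw [← sub_eq_add_of_zmod_two, sub_self]

theorem Submodule.sub_mem_of_eqvGen {R M : Type*} [Ring R] [AddCommGroup M] [Module R M]
    {S : Submodule R M} {r : α → α → Prop} {u : α → M} (h : ∀ a b, r a b → u a - u b ∈ S)
    {a b : α} (hab : EqvGen r a b) : u a - u b ∈ S :=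
  (Submodule.Quotient.eq S).1 <|
    Setoid.eqvGen_le (s := Setoid.ker fun a => (Submodule.Quotient.mk (u a) : M ⧸ S))
      (fun x y hxy => (Submodule.Quotient.eq S).2 (h x y hxy)) hab

theorem card_le_card_of_single_mem_span {ι W F : Type*} [Field F] [Finite ι] [Finite W]
    {v : ι → W →₀ F} (hv : ∀ w, Finsupp.single w 1 ∈ span F (Set.range v)) :
    Nat.card W ≤ Nat.card ι := by
  have := Fintype.ofFinite ι
  have := Fintype.ofFinite W
  have htop : span F (Set.range v) = ⊤ := by
    rw [eq_top_iff, ← Finsupp.basisSingleOne.span_eq, span_le]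
    rintro _ ⟨w, rfl⟩
    simpa using hv w
  simpa [Nat.card_eq_fintype_card] using finrank_le_of_span_eq_top htop

theorem Nat.card_eq_sum_card_fibers {β γ : Type*} [Fintype γ] [Finite β] (f : β → γ) :
    Nat.card β = ∑ c, Nat.card {b // f b = c} := by
  rw [← Nat.card_sigma, Nat.card_congr (Equiv.sigmaFiberEquiv f)]

theorem Nat.card_eq_sum_card_of_existsUnique {β γ : Type*} [Fintype γ] [Finite β]
    {p : β → Prop} {q : β → γ → Prop} (h : ∀ b, p b → ∃! c, q b c) :
    Nat.card {b // p b} = ∑ c, Nat.card {b // p b ∧ q b c} := by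
  choose f hf huniq using h
  rw [Nat.card_eq_sum_card_fibers fun b : {b // p b} => f b.1 b.2]
  refine Finset.sum_congr rfl fun c _ => Nat.card_congr
    { toFun := fun ⟨⟨b, hb⟩, hc⟩ => ⟨b, hb, hc ▸ hf b hb⟩
      invFun := fun b => ⟨⟨b.1, b.2.1⟩, (huniq _ _ _ b.2.2).symm⟩
      left_inv := fun _ => rfl
      right_inv := fun _ => rfl }

theorem Function.Involutive.wellOrderingRel_apply_iff {f : α → α} (hf : Function.Involutive f)
    {a : α} (ha : f a ≠ a) : WellOrderingRel (f a) (f (f a)) ↔ ¬ WellOrderingRel a (f a) := by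
  rw [hf a]
  refine ⟨fun h h' => asymm h h', fun h => ?_⟩
  rcases trichotomous_of WellOrderingRel a (f a) with h' | h' | h'
  exacts [(h h').elim, (ha h'.symm).elim, h']

theorem Function.Involutive.card_eq_card_fixed_add_two_mul [Finite α] {f : α → α}
    (hf : Function.Involutive f) :
    Nat.card α = Nat.card {a // f a = a} + 2 * Nat.card {a // WellOrderingRel a (f a)} := by
  classical
  have hmoved_iff (a : α) : f a ≠ a ↔ WellOrderingRel a (f a) ∨ WellOrderingRel (f a) a := by
    refine ⟨fun hmov => ?_, ?_⟩
    · rcases trichotomous_of WellOrderingRel a (f a) with h | h | h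
      exacts [.inl h, (hmov h.symm).elim, .inr h]
    · rintro (h | h) hfix <;> rw [hfix] at h <;> exact irrefl _ h
  have hmoved :
      {a // f a ≠ a} ≃ {a // WellOrderingRel a (f a)} ⊕ {a // WellOrderingRel (f a) a} :=
    (Equiv.subtypeEquivRight hmoved_iff).trans <|
      subtypeOrEquiv (fun a => WellOrderingRel a (f a)) (fun a => WellOrderingRel (f a) a)
        fun _ hlt hgt a ha => asymm (hlt a ha) (hgt a ha)
  have hswap : {a // WellOrderingRel (f a) a} ≃ {a // WellOrderingRel a (f a)} :=
    (hf.toPerm f).subtypeEquiv fun a => by simp [hf a]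
  rw [← Nat.card_congr (Equiv.sumCompl fun a => f a = a), Nat.card_sum, Nat.card_congr hmoved,
    Nat.card_sum, Nat.card_congr hswap, two_mul]

theorem Sym2.exists_eq_mk {α : Type*} (z : Sym2 α) : ∃ a b, z = s(a, b) :=
  Sym2.inductionOn z fun a b => ⟨a, b, rfl⟩

end General

namespace FinGraph

variable {G : FinGraph} (σ : RealStructure G)

instance : DecidablePred (RealV σ) := fun v => inferInstanceAs (Decidable (σ.ιV v = v))

instance : Finite (RV σ) := Subtype.finite

instance : Finite (CompR σ) := Quotient.finite _

theorem genus_eq_of_connected (hG : G.Connected) :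
    G.genus = 1 + Nat.card G.E - Nat.card G.V := by
  have hc : G.numComponents = 1 := Nat.card_eq_one_iff_unique.2
    ⟨⟨Quotient.ind₂ fun v w =>
        Quotient.sound (EqvGen.reflTransGen_le_eqvGen G.Adj v w (hG.2 v w))⟩,
      ⟨Quotient.mk _ hG.1.some⟩⟩
  simp [genus, hc, Nat.card_eq_fintype_card]

theorem realV_ιV_iff {v : G.V} : RealV σ (σ.ιV v) ↔ RealV σ v := by
  rw [RealV, RealV, σ.ιV_invol, eq_comm]

theorem ψ_ιE_eq {e : G.E} {a b : G.V} (hψ : G.ψ e = s(a, b)) :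
    G.ψ (σ.ιE e) = s(σ.ιV a, σ.ιV b) := by
  rw [σ.compat, hψ, Sym2.map_mk]

theorem realV_and_realV_or_eq_ιV_of_realE {e : G.E} (he : RealE σ e) {v w : G.V}
    (hψ : G.ψ e = s(v, w)) : RealV σ v ∧ RealV σ w ∨ w = σ.ιV v := by
  have hmap : s(v, w) = s(σ.ιV v, σ.ιV w) := by
    rw [← hψ, ← ψ_ιE_eq σ hψ, he]
  rcases Sym2.eq_iff.1 hmap with ⟨hv, hw⟩ | ⟨-, hw⟩
  · exact .inl ⟨hv.symm, hw.symm⟩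
  · exact .inr hw

theorem eqvGen_adjR_of_mem {e : G.E} (he : NonIsolatedRealE σ e) {v w : RV σ}
    (hv : v.1 ∈ G.ψ e) (hw : w.1 ∈ G.ψ e) : EqvGen (adjR σ) v w := by
  obtain ⟨a, b, hab⟩ := (G.ψ e).exists_eq_mk
  let a' : RV σ := ⟨a, he.2 a (hab ▸ Sym2.mem_mk_left a b)⟩
  let b' : RV σ := ⟨b, he.2 b (hab ▸ Sym2.mem_mk_right a b)⟩
  have hcomp : ∀ u : RV σ, u.1 ∈ G.ψ e → EqvGen (adjR σ) a' u := by
    intro u hu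
    rw [hab, Sym2.mem_iff] at hu
    rcases hu with hu | hu
    · rw [show u = a' from Subtype.ext hu]
      exact .refl _
    · rw [show u = b' from Subtype.ext hu]
      exact .rel _ _ ⟨e, he, hab⟩
  exact .trans _ _ _ (.symm _ _ (hcomp v hv)) (hcomp w hw)

theorem existsUnique_compR_of_nonIsolatedRealE {e : G.E} (he : NonIsolatedRealE σ e) :
    ∃! c : CompR σ, ∃ v : RV σ, v.1 ∈ G.ψ e ∧ Quotient.mk _ v = c := by
  obtain ⟨v, hv⟩ : ∃ v : RV σ, v.1 ∈ G.ψ e :=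
    ⟨⟨_, he.2 _ (Sym2.out_fst_mem _)⟩, Sym2.out_fst_mem _⟩
  refine ⟨_, ⟨v, hv, rfl⟩, ?_⟩
  rintro _ ⟨w, hw, rfl⟩
  exact Quotient.sound (eqvGen_adjR_of_mem σ he hw hv)

theorem sNum_eq : sNum σ = Nat.card {e // IsolatedRealE σ e} + 2 * Nat.card (CompR σ)
    + Nat.card {e // NonIsolatedRealE σ e} - Nat.card (RV σ) := by
  have := Fintype.ofFinite (CompR σ)
  have hV : Nat.card (RV σ) =
      ∑ c : CompR σ, Nat.card {v : RV σ // Quotient.mk (EqvGen.setoid (adjR σ)) v = c} :=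
    Nat.card_eq_sum_card_fibers _
  rw [sNum, finsum_eq_sum_of_fintype, hV,
    Nat.card_eq_sum_card_of_existsUnique (p := NonIsolatedRealE σ)
      fun _ => existsUnique_compR_of_nonIsolatedRealE σ]
  simp only [compGenus, Nat.cast_sum, Finset.sum_add_distrib, Finset.sum_sub_distrib,
    Finset.sum_const, Finset.card_univ, Nat.card_eq_fintype_card]
  ring

noncomputable def realSingle (v : G.V) : RV σ →₀ ZMod 2 :=
  if h : RealV σ v then Finsupp.single ⟨v, h⟩ 1 else 0

noncomputable def realEdgeVec (e : G.E) : RV σ →₀ ZMod 2 :=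
  Sym2.lift ⟨fun a b => realSingle σ a + realSingle σ b, fun _ _ => add_comm _ _⟩ (G.ψ e)

theorem single_sub_single_mem_of_adjR {v w : RV σ} (h : adjR σ v w) :
    Finsupp.single v 1 - Finsupp.single w 1 ∈
      span (ZMod 2) (Set.range fun e : {e // NonIsolatedRealE σ e} => realEdgeVec σ e.1) := by
  obtain ⟨e, he, hψ⟩ := h
  have hvec : realEdgeVec σ e = Finsupp.single v 1 + Finsupp.single w 1 := by
    simp only [realEdgeVec, hψ, Sym2.lift_mk, realSingle, dif_pos v.2, dif_pos w.2]
    rfl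
  rw [sub_eq_add_of_zmod_two, ← hvec]
  exact subset_span ⟨⟨e, he⟩, rfl⟩

theorem card_rv_le :
    Nat.card (RV σ) ≤ Nat.card {e // NonIsolatedRealE σ e} + Nat.card (CompR σ) := by
  rw [← Nat.card_sum]
  refine card_le_card_of_single_mem_span
    (v := Sum.elim (fun e => realEdgeVec σ e.1) fun c : CompR σ => Finsupp.single c.out 1)
    fun v => ?_
  have hsub := sub_mem_of_eqvGen (fun _ _ h => single_sub_single_mem_of_adjR σ h)
    (Quotient.exact (Quotient.out_eq (Quotient.mk (EqvGen.setoid (adjR σ)) v)))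
  rw [← sub_sub_cancel (Finsupp.single _ 1) (Finsupp.single v 1)]
  refine sub_mem (subset_span ⟨.inr (Quotient.mk _ v), rfl⟩) (span_mono ?_ hsub)
  exact Set.range_subset_iff.2 fun e => ⟨.inl e, rfl⟩

/-- An arbitrary choice of one vertex in each conjugate pair. -/
def LowerV (v : G.V) : Prop := WellOrderingRel v (σ.ιV v)

def LowerE (e : G.E) : Prop := WellOrderingRel e (σ.ιE e)

theorem card_V_eq : Nat.card G.V = Nat.card (RV σ) + 2 * Nat.card {v // LowerV σ v} :=
  Function.Involutive.card_eq_card_fixed_add_two_mul σ.ιV_invol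

theorem card_realE_eq : Nat.card {e // RealE σ e} =
    Nat.card {e // IsolatedRealE σ e} + Nat.card {e // NonIsolatedRealE σ e} := by
  classical
  rw [← Nat.card_sum, ← Nat.card_congr (subtypeOrEquiv _ _ fun _ hiso hnon e he =>
    let ⟨_, v, hv, hnv⟩ := hiso e he; hnv ((hnon e he).2 v hv))]
  refine Nat.card_congr (Equiv.subtypeEquivRight fun e => ⟨fun he => ?_, ?_⟩)
  · by_cases hends : ∀ v ∈ G.ψ e, RealV σ v
    · exact .inr ⟨he, hends⟩
    · push Not at hends
      exact .inl ⟨he, hends⟩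
  · rintro (he | he) <;> exact he.1

theorem card_E_eq : Nat.card G.E = Nat.card {e // IsolatedRealE σ e} +
    Nat.card {e // NonIsolatedRealE σ e} + 2 * Nat.card {e // LowerE σ e} := by
  rw [← card_realE_eq]
  exact Function.Involutive.card_eq_card_fixed_add_two_mul σ.ιE_invol

theorem lowerV_ιV_iff {v : G.V} (hv : ¬ RealV σ v) : LowerV σ (σ.ιV v) ↔ ¬ LowerV σ v :=
  Function.Involutive.wellOrderingRel_apply_iff σ.ιV_invol hv

theorem not_lowerV_of_realV {v : G.V} (hv : RealV σ v) : ¬ LowerV σ v := by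
  unfold LowerV
  rw [show σ.ιV v = v from hv]
  exact irrefl v

open scoped Classical in
/-- The vertex of `H` onto which `v` is contracted; a conjugate pair is represented by its lower
vertex. -/
noncomputable def quotV (v : G.V) : CompR σ ⊕ {v // LowerV σ v} :=
  if hr : RealV σ v then .inl (Quotient.mk _ ⟨v, hr⟩)
  else if hl : LowerV σ v then .inr ⟨v, hl⟩
  else .inr ⟨σ.ιV v, (lowerV_ιV_iff σ hr).2 hl⟩

theorem quotV_ιV (v : G.V) : quotV σ (σ.ιV v) = quotV σ v := by
  by_cases hr : RealV σ v
  · rw [show σ.ιV v = v from hr]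
  have hr' : ¬ RealV σ (σ.ιV v) := fun hr' => hr ((realV_ιV_iff σ).1 hr')
  by_cases hl : LowerV σ v
  · have hl' : ¬ LowerV σ (σ.ιV v) := fun hl' => (lowerV_ιV_iff σ hr).1 hl' hl
    simp only [quotV, dif_neg hr, dif_neg hr', dif_pos hl, dif_neg hl', σ.ιV_invol]
  · simp only [quotV, dif_neg hr, dif_neg hr', dif_neg hl, dif_pos ((lowerV_ιV_iff σ hr).2 hl)]

theorem quotV_surjective : Function.Surjective (quotV σ) := by
  rintro (c | ⟨v, hl⟩)
  · induction c using Quotient.inductionOn with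
    | h v => exact ⟨v.1, by rw [quotV, dif_pos v.2]; rfl⟩
  · exact ⟨v, by rw [quotV, dif_neg fun hr => not_lowerV_of_realV σ hr hl, dif_pos hl]⟩

theorem quotV_eq_of_realE {e : G.E} (he : RealE σ e) {v w : G.V} (hψ : G.ψ e = s(v, w)) :
    quotV σ v = quotV σ w := by
  rcases realV_and_realV_or_eq_ιV_of_realE σ he hψ with ⟨hv, hw⟩ | rfl
  · have hni : NonIsolatedRealE σ e := ⟨he, fun u hu => by
      rw [hψ, Sym2.mem_iff] at hu
      rcases hu with rfl | rfl
      exacts [hv, hw]⟩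
    rw [quotV, quotV, dif_pos hv, dif_pos hw]
    exact congrArg Sum.inl (Quotient.sound (.rel _ _ ⟨e, hni, hψ⟩))
  · exact (quotV_ιV σ v).symm

/-- The vertices of `H`, and `none` for the voltage coordinate `ε`. -/
abbrev QVert := Option (CompR σ ⊕ {v // LowerV σ v})

noncomputable def voltageVec : QVert σ →₀ ZMod 2 := Finsupp.single none 1

open scoped Classical in
noncomputable def sheetVec (v : G.V) : QVert σ →₀ ZMod 2 :=
  Finsupp.single (some (quotV σ v)) 1 + if LowerV σ v then voltageVec σ else 0

noncomputable def edgeVec (e : G.E) : QVert σ →₀ ZMod 2 :=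
  Sym2.lift ⟨fun a b => sheetVec σ a + sheetVec σ b, fun _ _ => add_comm _ _⟩ (G.ψ e)

noncomputable def edgeSpan : Submodule (ZMod 2) (QVert σ →₀ ZMod 2) :=
  span (ZMod 2) (Set.range fun e : {e // LowerE σ e} => edgeVec σ e.1)

theorem edgeVec_of_ψ_eq {e : G.E} {a b : G.V} (hψ : G.ψ e = s(a, b)) :
    edgeVec σ e = sheetVec σ a + sheetVec σ b := by
  rw [edgeVec, hψ, Sym2.lift_mk]

theorem sheetVec_sub_single_mem (v : G.V) :
    sheetVec σ v - Finsupp.single (some (quotV σ v)) 1 ∈ span (ZMod 2) {voltageVec σ} := by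
  rw [sheetVec, add_sub_cancel_left]
  split_ifs
  exacts [mem_span_singleton_self _, zero_mem _]

theorem sheetVec_ιV {v : G.V} (hv : ¬ RealV σ v) :
    sheetVec σ (σ.ιV v) = sheetVec σ v + voltageVec σ := by
  by_cases hl : LowerV σ v
  · have hl' : ¬ LowerV σ (σ.ιV v) := fun hl' => (lowerV_ιV_iff σ hv).1 hl' hl
    rw [sheetVec, sheetVec, quotV_ιV, if_neg hl', if_pos hl, add_zero, add_assoc,
      add_self_eq_zero_of_zmod_two, add_zero]
  · rw [sheetVec, sheetVec, quotV_ιV, if_pos ((lowerV_ιV_iff σ hv).2 hl), if_neg hl, add_zero]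

theorem sheetVec_ιV_sub_mem (v : G.V) :
    sheetVec σ (σ.ιV v) - sheetVec σ v ∈ span (ZMod 2) {voltageVec σ} := by
  by_cases hv : RealV σ v
  · rw [show σ.ιV v = v from hv, sub_self]
    exact zero_mem _
  · rw [sheetVec_ιV σ hv, add_sub_cancel_left]
    exact mem_span_singleton_self _

theorem edgeVec_ιE_sub_mem (e : G.E) :
    edgeVec σ (σ.ιE e) - edgeVec σ e ∈ span (ZMod 2) {voltageVec σ} := by
  obtain ⟨a, b, hψ⟩ := (G.ψ e).exists_eq_mk
  rw [edgeVec_of_ψ_eq σ (ψ_ιE_eq σ hψ), edgeVec_of_ψ_eq σ hψ, add_sub_add_comm]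
  exact add_mem (sheetVec_ιV_sub_mem σ a) (sheetVec_ιV_sub_mem σ b)

theorem edgeVec_ιE_of_forall_not_realV {e : G.E} (hends : ∀ v ∈ G.ψ e, ¬ RealV σ v) :
    edgeVec σ (σ.ιE e) = edgeVec σ e := by
  obtain ⟨a, b, hψ⟩ := (G.ψ e).exists_eq_mk
  rw [hψ] at hends
  rw [edgeVec_of_ψ_eq σ (ψ_ιE_eq σ hψ), edgeVec_of_ψ_eq σ hψ,
    sheetVec_ιV σ (hends a (Sym2.mem_mk_left a b)),
    sheetVec_ιV σ (hends b (Sym2.mem_mk_right a b)),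
    add_add_add_comm, add_self_eq_zero_of_zmod_two, add_zero]

theorem edgeVec_mem_edgeSpan_or {e : G.E} (he : ¬ RealE σ e) :
    edgeVec σ e ∈ edgeSpan σ ∨ edgeVec σ (σ.ιE e) ∈ edgeSpan σ := by
  by_cases hl : LowerE σ e
  · exact .inl (subset_span ⟨⟨e, hl⟩, rfl⟩)
  · exact .inr (subset_span
      ⟨⟨σ.ιE e, (Function.Involutive.wellOrderingRel_apply_iff σ.ιE_invol he).2 hl⟩, rfl⟩)

theorem edgeVec_mem_edgeSpan {e : G.E} (he : ¬ RealE σ e)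
    (hends : ∀ v ∈ G.ψ e, ¬ RealV σ v) : edgeVec σ e ∈ edgeSpan σ :=
  (edgeVec_mem_edgeSpan_or σ he).elim id (edgeVec_ιE_of_forall_not_realV σ hends ▸ ·)

theorem edgeVec_mem_edgeSpan_sup {e : G.E} (he : ¬ RealE σ e) :
    edgeVec σ e ∈ edgeSpan σ ⊔ span (ZMod 2) {voltageVec σ} := by
  rcases edgeVec_mem_edgeSpan_or σ he with h | h
  · exact mem_sup_left h
  · rw [← sub_sub_cancel (edgeVec σ (σ.ιE e)) (edgeVec σ e)]
    exact sub_mem (mem_sup_left h) (mem_sup_right (edgeVec_ιE_sub_mem σ e))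

theorem single_sub_single_mem_of_adj {v w : G.V} (h : G.Adj v w) :
    Finsupp.single (some (quotV σ v)) 1 - Finsupp.single (some (quotV σ w)) 1 ∈
      edgeSpan σ ⊔ span (ZMod 2) {voltageVec σ} := by
  obtain ⟨e, hψ⟩ := h
  by_cases he : RealE σ e
  · rw [quotV_eq_of_realE σ he hψ, sub_self]
    exact zero_mem _
  have hsplit : Finsupp.single (some (quotV σ v)) 1 - Finsupp.single (some (quotV σ w)) 1 =
      edgeVec σ e - (sheetVec σ v - Finsupp.single (some (quotV σ v)) 1)
        - (sheetVec σ w - Finsupp.single (some (quotV σ w)) 1) := by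
    rw [edgeVec_of_ψ_eq σ hψ, sub_eq_add_of_zmod_two]
    abel
  rw [hsplit]
  exact sub_mem (sub_mem (edgeVec_mem_edgeSpan_sup σ he)
    (mem_sup_right (sheetVec_sub_single_mem σ v))) (mem_sup_right (sheetVec_sub_single_mem σ w))

theorem sheetVec_sub_mem_of_nonRealAdj {v w : G.V} (h : nonRealAdj σ v w) :
    sheetVec σ v - sheetVec σ w ∈ edgeSpan σ := by
  obtain ⟨hv, hw, e, he, hψ⟩ := h
  have hends : ∀ u ∈ G.ψ e, ¬ RealV σ u := by
    intro u hu
    rw [hψ, Sym2.mem_iff] at hu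
    rcases hu with rfl | rfl
    exacts [hv, hw]
  rw [sub_eq_add_of_zmod_two, ← edgeVec_of_ψ_eq σ hψ]
  exact edgeVec_mem_edgeSpan σ he hends

theorem voltageVec_mem_edgeSpan (ha : aProp σ) : voltageVec σ ∈ edgeSpan σ := by
  obtain ⟨v, hv, hwalk⟩ := ha
  have := sub_mem_of_eqvGen (fun _ _ h => sheetVec_sub_mem_of_nonRealAdj σ h)
    (EqvGen.reflTransGen_le_eqvGen _ _ _ hwalk)
  rwa [sheetVec_ιV σ hv, sub_add_cancel_left, neg_mem_iff] at this

theorem single_mem_of_edgeSpan_sup_le (hG : G.Connected)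
    {T : Submodule (ZMod 2) (QVert σ →₀ ZMod 2)}
    (hT : edgeSpan σ ⊔ span (ZMod 2) {voltageVec σ} ≤ T)
    {v₀ : G.V} (hv₀ : Finsupp.single (some (quotV σ v₀)) 1 ∈ T) (w : QVert σ) :
    Finsupp.single w 1 ∈ T := by
  rcases w with _ | y
  · exact hT (mem_sup_right (mem_span_singleton_self _))
  · obtain ⟨v, rfl⟩ := quotV_surjective σ y
    rw [← sub_sub_cancel (Finsupp.single (some (quotV σ v₀)) 1) (Finsupp.single _ 1)]
    exact sub_mem hv₀ (hT (sub_mem_of_eqvGen (fun _ _ h => single_sub_single_mem_of_adj σ h)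
      (EqvGen.reflTransGen_le_eqvGen _ _ _ (hG.2 v₀ v))))

theorem edgeSpan_le_span_sum_elim {ι : Type*} (u : ι → QVert σ →₀ ZMod 2) :
    edgeSpan σ ≤
      span (ZMod 2) (Set.range (Sum.elim (fun e : {e // LowerE σ e} => edgeVec σ e.1) u)) :=
  span_mono (Set.range_subset_iff.2 fun e => ⟨.inl e, rfl⟩)

theorem card_compR_add_card_lowerV_le (hG : G.Connected) :
    Nat.card (CompR σ) + Nat.card {v // LowerV σ v} ≤ Nat.card {e // LowerE σ e} + 1 := by
  obtain ⟨v₀⟩ := hG.1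
  have h := card_le_card_of_single_mem_span
    (v := Sum.elim (fun e : {e // LowerE σ e} => edgeVec σ e.1)
      ![voltageVec σ, Finsupp.single (some (quotV σ v₀)) 1])
    (single_mem_of_edgeSpan_sup_le σ hG (sup_le (edgeSpan_le_span_sum_elim σ _)
      (span_le.2 (Set.singleton_subset_iff.2 (subset_span ⟨.inr 0, rfl⟩))))
      (subset_span ⟨.inr 1, rfl⟩))
  simp only [Finite.card_option, Nat.card_sum, Nat.card_eq_fintype_card (α := Fin 2),
    Fintype.card_fin] at h
  omega

theorem card_compR_add_card_lowerV_le_of_aProp (hG : G.Connected) (ha : aProp σ) :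
    Nat.card (CompR σ) + Nat.card {v // LowerV σ v} ≤ Nat.card {e // LowerE σ e} := by
  obtain ⟨v₀⟩ := hG.1
  have h := card_le_card_of_single_mem_span
    (v := Sum.elim (fun e : {e // LowerE σ e} => edgeVec σ e.1)
      fun _ : Unit => Finsupp.single (some (quotV σ v₀)) 1)
    (single_mem_of_edgeSpan_sup_le σ hG (sup_le (edgeSpan_le_span_sum_elim σ _)
      (span_le.2 (Set.singleton_subset_iff.2 (edgeSpan_le_span_sum_elim σ _
        (voltageVec_mem_edgeSpan σ ha)))))
      (subset_span ⟨.inr (), rfl⟩))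
  simp only [Finite.card_option, Nat.card_sum, Nat.card_unique] at h
  omega

theorem aProp_of_card_eq_zero (hG : G.Connected) (hC : Nat.card (CompR σ) = 0)
    (hI : Nat.card {e // IsolatedRealE σ e} = 0) : aProp σ := by
  have hV : ∀ v, ¬ RealV σ v := fun v hv =>
    (Finite.card_eq_zero_iff.1 hC).false (Quotient.mk _ ⟨v, hv⟩)
  have hE : ∀ e, ¬ RealE σ e := fun e he =>
    (Finite.card_eq_zero_iff.1 hI).false ⟨e, he, _, Sym2.out_fst_mem _, hV _⟩
  obtain ⟨v₀⟩ := hG.1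
  exact ⟨v₀, hV v₀, ReflTransGen.mono (fun a b ⟨e, hψ⟩ => ⟨hV a, hV b, e, hE e, hψ⟩) _ _
    (hG.2 _ _)⟩

end FinGraph

open FinGraph in
/-- For a connected finite graph `G` with a real structure:
`s(G) ≡ g(G) + 1 (mod 2)`, `0 ≤ s(G) ≤ g(G) + 1`, `s(G) ≠ g(G) + 1` if
`a(G) = 1`, and `s(G) ≠ 0` if `a(G) = 0`. -/
theorem sNum_constraints (G : FinGraph) (σ : RealStructure G) (hG : G.Connected) :
    sNum σ ≡ G.genus + 1 [ZMOD 2] ∧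
    0 ≤ sNum σ ∧ sNum σ ≤ G.genus + 1 ∧
    (aProp σ → sNum σ ≠ G.genus + 1) ∧
    (¬ aProp σ → sNum σ ≠ 0) := by
  have hs := sNum_eq σ
  have hg := genus_eq_of_connected hG
  have hV := card_V_eq σ
  have hE := card_E_eq σ
  have hR := card_rv_le σ
  have hH := card_compR_add_card_lowerV_le σ hG
  refine ⟨by unfold Int.ModEq; omega, by omega, by omega, fun ha => ?_, fun hna hs0 => ?_⟩
  · have := card_compR_add_card_lowerV_le_of_aProp σ hG ha
    omega
  · exact hna (aProp_of_card_eq_zero σ hG (by omega) (by omega))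
end

section
/- There exists a connected finite graph G with a real structure and a real divisor D on G such that rk_ℝ(D) = 1 and rk(D) = 0; hence the inequality rk_ℝ(D) ≥ rk(D) can be strict. -/
/-!
Take the triangle with the reflection fixing vertex `0` and swapping `1` and `2`, and
`D = (0)`. A real effective divisor gives equal weight to `1` and `2`, so the only one of
degree `1` is `(0)` itself, and `rk_ℝ(D) = 1 = deg D`. On the other hand `rk(D) = 0`: an
effective divisor equivalent to `(0)` containing `1` would be `(1)`, but `(1) - (0)` is not
principal since it has order `3` in the Jacobian of the triangle.
-/

namespace FinGraph

section Divisors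

variable {G : FinGraph}

lemma deg_add (A B : G.V → ℤ) : deg (A + B) = deg A + deg B :=
  Finset.sum_add_distrib

lemma deg_sub (A B : G.V → ℤ) : deg (A - B) = deg A - deg B :=
  Finset.sum_sub_distrib _ _

lemma deg_smul (r : ℤ) (A : G.V → ℤ) : deg (r • A) = r * deg A := by
  simp only [deg, Pi.smul_apply, smul_eq_mul, Finset.mul_sum]

lemma deg_unitDiv (v : G.V) : deg (unitDiv G v) = 1 := by
  simp [deg, unitDiv]

lemma eff_unitDiv (v : G.V) : Eff (unitDiv G v) := fun w => by
  unfold unitDiv; split_ifs <;> simp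

lemma eq_zero_of_eff_of_deg_eq_zero {A : G.V → ℤ} (hA : Eff A) (h : deg A = 0) : A = 0 :=
  funext fun v => (Finset.sum_eq_zero_iff_of_nonneg fun w _ => hA w).1 h v (Finset.mem_univ v)

lemma eq_of_eff_sub_of_deg_eq {A B : G.V → ℤ} (h : Eff (A - B)) (hdeg : deg A = deg B) :
    A = B :=
  sub_eq_zero.1 (eq_zero_of_eff_of_deg_eq_zero h (by rw [deg_sub, hdeg, sub_self]))

lemma sum_edgeLap (f : G.V → ℤ) (e : G.E) : ∑ v, edgeLap G f e v = 0 := by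
  unfold edgeLap
  induction G.ψ e using Sym2.ind with
  | _ a b => simp [Finset.sum_add_distrib]

lemma deg_lap (f : G.V → ℤ) : deg (Lap G f) = 0 := by
  simp only [deg, Lap]
  rw [Finset.sum_comm]
  exact Finset.sum_eq_zero fun e _ => sum_edgeLap f e

lemma lap_zero : Lap G 0 = 0 := by
  funext v
  refine Finset.sum_eq_zero fun e _ => ?_
  unfold edgeLap
  induction G.ψ e using Sym2.ind with
  | _ a b => simp

lemma LinEquiv.refl (D : G.V → ℤ) : LinEquiv G D D :=
  ⟨0, by rw [lap_zero, add_zero]⟩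

lemma LinEquiv.deg_eq {D D' : G.V → ℤ} (h : LinEquiv G D D') : deg D' = deg D := by
  obtain ⟨f, rfl⟩ := h
  rw [deg_add, deg_lap, add_zero]

end Divisors

section Rank

variable {G : FinGraph} {D : G.V → ℤ}

lemma rankGE_zero_of_eff (hD : Eff D) : RankGE G D 0 := fun E hE hdeg =>
  ⟨D, LinEquiv.refl D, hD, by rw [eq_zero_of_eff_of_deg_eq_zero hE hdeg, sub_zero]; exact hD⟩

lemma RankGE.of_le {r s : ℤ} (h : RankGE G D s) (hrs : r ≤ s) (v : G.V) : RankGE G D r := by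
  intro E hE hdeg
  have hpad : Eff ((s - r) • unitDiv G v) := fun w =>
    mul_nonneg (sub_nonneg.2 hrs) (eff_unitDiv v w)
  obtain ⟨D', hlin, hD', hdom⟩ := h (E + (s - r) • unitDiv G v)
    (fun w => add_nonneg (hE w) (hpad w))
    (by rw [deg_add, deg_smul, deg_unitDiv, hdeg]; ring)
  refine ⟨D', hlin, hD', fun w => ?_⟩
  have hdom_w := hdom w
  simp only [Pi.sub_apply, Pi.add_apply] at hdom_w ⊢
  linarith [hpad w]

variable {σ : RealStructure G}

lemma isRealDiv_smul_unitDiv (r : ℤ) {v : G.V} (hv : RealV σ v) :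
    IsRealDiv σ (r • unitDiv G v) := by
  funext w
  have : σ.ιV w = v ↔ w = v :=
    ⟨fun h => by rw [← σ.ιV_invol w, h, hv], fun h => by rw [h, hv]⟩
  simp only [conjDiv, Pi.smul_apply, unitDiv, this]

lemma RealRankGE.le_deg {r : ℤ} (h : RealRankGE σ D r) (hr : 0 ≤ r) {v : G.V}
    (hv : RealV σ v) : r ≤ deg D := by
  obtain ⟨D', hlin, -, -, hdom⟩ := h (r • unitDiv G v)
    (fun w => mul_nonneg hr (eff_unitDiv v w)) (isRealDiv_smul_unitDiv r hv)
    (by rw [deg_smul, deg_unitDiv, mul_one])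
  have hsub : 0 ≤ deg (D' - r • unitDiv G v) := Finset.sum_nonneg fun w _ => hdom w
  rwa [deg_sub, deg_smul, deg_unitDiv, hlin.deg_eq, mul_one, sub_nonneg] at hsub

end Rank

abbrev cycle3 : FinGraph := { V := Fin 3, E := Fin 3, ψ := fun e => s(e, e + 1) }

def cycle3Reflection : RealStructure cycle3 where
  ιV v := -v
  -- the edge `{e, e + 1}` is mapped to `{-e - 1, -e}`
  ιE e := -e - 1
  ιV_invol v := neg_neg v
  ιE_invol e := by fin_cases e <;> rfl
  compat e := by
    show s(-e - 1, -e - 1 + 1) = Sym2.map (fun v => -v) s(e, e + 1)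
    rw [Sym2.map_mk]
    fin_cases e <;> first | rfl | exact Sym2.eq_swap

lemma cycle3_connected : cycle3.Connected := by
  have step : ∀ v : Fin 3, Relation.ReflTransGen cycle3.Adj v (v + 1) :=
    fun v => .single ⟨v, rfl⟩
  refine ⟨⟨0⟩, fun v w => ?_⟩
  fin_cases v <;> fin_cases w
  all_goals first
    | exact .refl
    | exact step _
    | exact (step _).trans (step _)

lemma cycle3_lap_apply (f : cycle3.V → ℤ) (v : cycle3.V) :
    Lap cycle3 f v = f (v + 1) + f (v + 2) - 2 * f v := by
  fin_cases v <;> simp [Lap, edgeLap, Fin.sum_univ_three] <;> ring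

lemma cycle3_isRealDiv_iff (X : cycle3.V → ℤ) : IsRealDiv cycle3Reflection X ↔ X 2 = X 1 := by
  refine ⟨fun h => congrFun h 1, fun h => funext fun v => ?_⟩
  fin_cases v
  exacts [rfl, h, h.symm]

lemma cycle3_deg_eq (X : cycle3.V → ℤ) : deg X = X 0 + X 1 + X 2 :=
  Fin.sum_univ_three X

lemma cycle3_realV_zero : RealV cycle3Reflection 0 := rfl

lemma cycle3_eq_unitDiv_zero_of_real {E : cycle3.V → ℤ} (hE : Eff E)
    (hreal : IsRealDiv cycle3Reflection E) (hdeg : deg E = 1) : E = unitDiv cycle3 0 := by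
  rw [cycle3_isRealDiv_iff] at hreal
  rw [cycle3_deg_eq] at hdeg
  have := hE 0
  have := hE 1
  funext v
  fin_cases v <;> simp [unitDiv] <;> omega

lemma cycle3_not_linEquiv_unitDiv : ¬ LinEquiv cycle3 (unitDiv cycle3 0) (unitDiv cycle3 1) := by
  rintro ⟨f, hf⟩
  have h1 := congrFun hf 1
  have h2 := congrFun hf 2
  simp only [Pi.add_apply, cycle3_lap_apply, unitDiv, Fin.reduceAdd, Fin.reduceEq, one_ne_zero,
    ↓reduceIte, zero_add] at h1 h2
  -- subtracting the equations at `1` and `2` gives `3 * (f 2 - f 1) = 1`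
  omega

lemma cycle3_not_rankGE_one : ¬ RankGE cycle3 (unitDiv cycle3 0) 1 := by
  intro h
  obtain ⟨D', hlin, -, hdom⟩ := h (unitDiv cycle3 1) (eff_unitDiv 1) (deg_unitDiv 1)
  have hD' : D' = unitDiv cycle3 1 :=
    eq_of_eff_sub_of_deg_eq hdom (by rw [hlin.deg_eq, deg_unitDiv, deg_unitDiv])
  exact cycle3_not_linEquiv_unitDiv (hD' ▸ hlin)

end FinGraph

open FinGraph in
/-- There is a connected finite graph with a real structure
and a real divisor `D` on it with `rk_ℝ(D) = 1` and `rk(D) = 0`. -/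
theorem exists_realRank_gt_rank :
    ∃ (G : FinGraph) (σ : RealStructure G) (D : G.V → ℤ),
      G.Connected ∧ IsRealDiv σ D ∧ HasRealRank σ D 1 ∧ HasRank G D 0 := by
  refine ⟨cycle3, cycle3Reflection, unitDiv cycle3 0, cycle3_connected, ?_, ⟨?_, ?_⟩, ⟨?_, ?_⟩⟩
  · simpa using isRealDiv_smul_unitDiv 1 cycle3_realV_zero
  · intro E hE hreal hdeg
    obtain rfl := cycle3_eq_unitDiv_zero_of_real hE hreal hdeg
    exact ⟨_, LinEquiv.refl _, eff_unitDiv _, hreal, by rw [sub_self]; exact fun _ => le_rfl⟩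
  · intro r hr
    by_cases hr₀ : 0 ≤ r
    · exact (hr.le_deg hr₀ cycle3_realV_zero).trans_eq (deg_unitDiv _)
    · omega
  · exact rankGE_zero_of_eff (eff_unitDiv _)
  · exact fun r hr => le_of_not_gt fun hr₀ =>
      cycle3_not_rankGE_one (hr.of_le (by omega) (0 : cycle3.V))
end

section
/- Let G be a connected finite graph with a real structure, let D_1 and D_2 be real divisors on G, and let f : V(G) → ℤ satisfy Δ(f) = D_1 − D_2. Then f̄ = f, i.e., f(v̄) = f(v) for every vertex v. -/
/-!
The defect `g = f̄ - f` has principal divisor `Δ(f̄) - Δ(f) = D̄₁ - D̄₂ - (D₁ - D₂) = 0`, since `Δ`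
commutes with the real structure. By the maximum principle a function with `Δ(g) = 0` on a
connected graph is constant, and a constant `c` with `ḡ = -g` must vanish.
-/

namespace FinGraph

variable {G : FinGraph}

theorem edgeLap_sub (f₁ f₂ : G.V → ℤ) (e : G.E) :
    edgeLap G (f₁ - f₂) e = edgeLap G f₁ e - edgeLap G f₂ e := by
  funext v
  unfold edgeLap
  induction G.ψ e using Sym2.ind with
  | _ a b =>
    simp only [Sym2.lift_mk, Pi.sub_apply]
    split_ifs <;> ring

theorem Lap_sub (f₁ f₂ : G.V → ℤ) : Lap G (f₁ - f₂) = Lap G f₁ - Lap G f₂ := by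
  funext v
  simp only [Lap, edgeLap_sub, Pi.sub_apply, Finset.sum_sub_distrib]

theorem edgeLap_conjDiv (σ : RealStructure G) (f : G.V → ℤ) (e : G.E) (v : G.V) :
    edgeLap G (conjDiv σ f) e v = edgeLap G f (σ.ιE e) (σ.ιV v) := by
  have hinj : Function.Injective σ.ιV := Function.LeftInverse.injective σ.ιV_invol
  unfold edgeLap conjDiv
  rw [σ.compat]
  induction G.ψ e using Sym2.ind with
  | _ a b => simp [hinj.eq_iff]

theorem Lap_conjDiv (σ : RealStructure G) (f : G.V → ℤ) :
    Lap G (conjDiv σ f) = conjDiv σ (Lap G f) := by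
  funext v
  simp only [Lap, conjDiv, edgeLap_conjDiv]
  exact Fintype.sum_equiv (Function.Involutive.toPerm σ.ιE σ.ιE_invol) _ _ fun _ => rfl

theorem IsRealDiv.sub {σ : RealStructure G} {D₁ D₂ : G.V → ℤ} (h₁ : IsRealDiv σ D₁)
    (h₂ : IsRealDiv σ D₂) : IsRealDiv σ (D₁ - D₂) :=
  funext fun v => congrArg₂ (· - ·) (congrFun h₁ v) (congrFun h₂ v)

theorem edgeLap_nonpos_at_max {g : G.V → ℤ} {u : G.V} (hu : ∀ x, g x ≤ g u) (e : G.E) :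
    edgeLap G g e u ≤ 0 := by
  unfold edgeLap
  induction G.ψ e using Sym2.ind with
  | _ a b =>
    have ha := hu a
    have hb := hu b
    simp only [Sym2.lift_mk]
    split_ifs with h₁ h₂ h₂ <;> (try subst h₁) <;> (try subst h₂) <;> omega

theorem eq_at_max_of_adj {g : G.V → ℤ} {u w : G.V} (hu : ∀ x, g x ≤ g u)
    (hLap : Lap G g u = 0) (hadj : G.Adj u w) : g w = g u := by
  obtain ⟨e, he⟩ := hadj
  have he₀ : edgeLap G g e u = 0 :=
    (Finset.sum_eq_zero_iff_of_nonpos fun e _ => edgeLap_nonpos_at_max hu e).1 hLap e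
      (Finset.mem_univ e)
  by_cases huw : u = w
  · rw [huw]
  · simp only [edgeLap, he, Sym2.lift_mk, ↓reduceIte, huw, add_zero] at he₀
    omega

theorem Connected.exists_eq_const_of_Lap_eq_zero (hG : G.Connected) {g : G.V → ℤ}
    (hLap : Lap G g = 0) : ∃ c, ∀ v, g v = c := by
  have := hG.1
  obtain ⟨u, hu⟩ := Finite.exists_max g
  refine ⟨g u, fun w => ?_⟩
  induction hG.2 u w with
  | refl => rfl
  | tail _ hadj ih =>
    rw [← ih]
    exact eq_at_max_of_adj (fun x => ih ▸ hu x) (congrFun hLap _) hadj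

end FinGraph

open FinGraph in
/-- If `Δ(f) = D₁ - D₂` for real divisors `D₁, D₂` on a
connected graph with a real structure, then `f̄ = f`. -/
theorem conj_eq_self_of_principal_real (G : FinGraph) (σ : RealStructure G)
    (hG : G.Connected) (D₁ D₂ : G.V → ℤ) (h₁ : IsRealDiv σ D₁)
    (h₂ : IsRealDiv σ D₂) (f : G.V → ℤ) (hf : Lap G f = D₁ - D₂) :
    ∀ v : G.V, f (σ.ιV v) = f v := by
  have hLap : Lap G (conjDiv σ f - f) = 0 := by
    rw [Lap_sub, Lap_conjDiv, hf, h₁.sub h₂, sub_self]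
  obtain ⟨c, hc⟩ := hG.exists_eq_const_of_Lap_eq_zero hLap
  intro v
  have hv := hc v
  have hv' := hc (σ.ιV v)
  simp only [conjDiv, Pi.sub_apply, σ.ιV_invol] at hv hv'
  omega
end
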